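/- arXiv:2405.15354 — 3 statements merged into one kernel-verified Lean document; each statement's English description precedes it below -/
import Mathlib

section
/- Let $R=K[x_1,\ldots,x_n,y_1,\ldots,y_n]$ with the lexicographic order induced by $x_1>\cdots>x_n>y_1>\cdots>y_n$, let $G$ be a simple graph on $[n]$ with binomial edge ideal $J_G$, and let $f$ be a homogeneous polynomial of degree $m$ with $(J_G:f)=P$ for some minimal prime $P$ of $J_G$. Then there exists a homogeneous polynomial $g$ of degree $m$ such that the leading monomial of $g$ does not lie in the initial ideal of $J_G$ and $(J_G:g)=P$. -/
open MvPolynomial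

set_option synthInstance.maxHeartbeats 1000000

namespace Paper

noncomputable section

variable (K : Type) [Field K]

/-- The v-number of a graded ideal `I`: the least `d` such that there is a homogeneous
polynomial `f` of degree `d` with `(I : f)` an associated prime of `R/I`. -/
def vNumber {σ : Type} (I : Ideal (MvPolynomial σ K)) : ℕ :=
  sInf {d : ℕ | ∃ f : MvPolynomial σ K, f.IsHomogeneous d ∧
    IsAssociatedPrime (Submodule.colon I (Ideal.span {f})) (MvPolynomial σ K ⧸ I)}

/-- The local v-number of `I` at a prime `P`. -/
def vLocal {σ : Type} (I P : Ideal (MvPolynomial σ K)) : ℕ :=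
  sInf {d : ℕ | ∃ f : MvPolynomial σ K, f.IsHomogeneous d ∧
    Submodule.colon I (Ideal.span {f}) = P}

/-- The edge binomial `f_{ij} = x_i y_j - x_j y_i`. -/
def bedge {V : Type} (i j : V) : MvPolynomial (V ⊕ V) K :=
  X (Sum.inl i) * X (Sum.inr j) - X (Sum.inl j) * X (Sum.inr i)

/-- The binomial edge ideal of a graph `G`. -/
def beIdeal {V : Type} (G : SimpleGraph V) : Ideal (MvPolynomial (V ⊕ V) K) :=
  Ideal.span {p | ∃ i j : V, G.Adj i j ∧ p = bedge K i j}

/-- The (monomial) edge ideal of a graph `G`. -/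
def edgeIdealM {V : Type} (G : SimpleGraph V) : Ideal (MvPolynomial V K) :=
  Ideal.span {p | ∃ i j : V, G.Adj i j ∧ p = X i * X j}

/-- `i` and `j` are connected by a walk in `G` avoiding the set `S`. -/
def ReachAvoid {V : Type} (G : SimpleGraph V) (S : Set V) (i j : V) : Prop :=
  ∃ w : G.Walk i j, ∀ v ∈ w.support, v ∉ S

/-- The disjoint union of complete graphs on the connected components of `G ∖ S`. -/
def tildeG {V : Type} (G : SimpleGraph V) (S : Set V) : SimpleGraph V where
  Adj i j := i ≠ j ∧ ReachAvoid G S i j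
  symm := ⟨by
    rintro i j ⟨hne, w, hw⟩
    exact ⟨hne.symm, w.reverse, by
      intro v hv
      exact hw v (by simpa [SimpleGraph.Walk.support_reverse] using hv)⟩⟩
  loopless := ⟨fun i h => h.1 rfl⟩

/-- The minimal prime `P_S` of the binomial edge ideal corresponding to a cut set `S`. -/
def PSIdeal {V : Type} (G : SimpleGraph V) (S : Set V) : Ideal (MvPolynomial (V ⊕ V) K) :=
  Ideal.span ((fun i => (X (Sum.inl i) : MvPolynomial (V ⊕ V) K)) '' S ∪
      (fun i => (X (Sum.inr i) : MvPolynomial (V ⊕ V) K)) '' S)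
    ⊔ beIdeal K (tildeG G S)

/-- Number of connected components of the induced subgraph on the complement of `S`. -/
def numComp {V : Type} (G : SimpleGraph V) (S : Set V) : ℕ :=
  Nat.card ((G.induce Sᶜ).ConnectedComponent)

/-- `S` is a cut set of `G`. -/
def IsCutSet {V : Type} (G : SimpleGraph V) (S : Set V) : Prop :=
  ∀ s ∈ S, numComp G (S \ {s}) < numComp G S

/-- `v` is a cut vertex of `G`. -/
def IsCutVertex {V : Type} (G : SimpleGraph V) (v : V) : Prop :=
  numComp G (∅ : Set V) < numComp G {v}

/-- `G` is a cone graph: some vertex is adjacent to all others. -/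
def IsConeGraph {V : Type} (G : SimpleGraph V) : Prop :=
  ∃ v : V, ∀ u : V, u ≠ v → G.Adj v u

/-- `G` (with its labelling by `Fin n`) is a closed graph. -/
def IsClosedGraph {n : ℕ} (G : SimpleGraph (Fin n)) : Prop :=
  ∀ i j k : Fin n, i < j → j < k → G.Adj i k → G.Adj i j ∧ G.Adj j k

/-- `R/I` is Cohen-Macaulay: there is a regular sequence (inside the irrelevant
maximal ideal) on `R/I` whose length is the Krull dimension of `R/I`. -/
def IsCMQuot {σ : Type} (I : Ideal (MvPolynomial σ K)) : Prop :=
  ∃ rs : List (MvPolynomial σ K),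
    (∀ f ∈ rs, f ∈ Ideal.span (Set.range (X : σ → MvPolynomial σ K))) ∧
    RingTheory.Sequence.IsRegular (MvPolynomial σ K ⧸ I)
      (rs.map (Ideal.Quotient.mk I)) ∧
    ((rs.length : ℕ) : WithBot (WithTop ℕ)) = ringKrullDim (MvPolynomial σ K ⧸ I)

section Regularity

variable {σ : Type} [Fintype σ] [DecidableEq σ]

/-- An arbitrary linear order on a finite type. -/
def fintypeLO (σ : Type) [Fintype σ] [DecidableEq σ] : LinearOrder σ :=
  LinearOrder.lift' (Fintype.equivFin σ) (Fintype.equivFin σ).injective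

/-- Term of homological degree `i` of the Koszul complex of `R/I` with respect to all the
variables; its homology computes `Tor_i(R/I, K)`. -/
abbrev KC (I : Ideal (MvPolynomial σ K)) (i : ℕ) : Type :=
  {T : Finset σ // T.card = i} → MvPolynomial σ K ⧸ I

/-- The Koszul differential. -/
def koszD (I : Ideal (MvPolynomial σ K)) (i : ℕ) (f : KC K I (i + 1)) : KC K I i :=
  letI LO := fintypeLO σ
  letI : (p : Prop) → Decidable p := Classical.propDecidable
  fun T => ∑ t ∈ (Finset.univ \ T.1).attach,
    ((-1 : MvPolynomial σ K ⧸ I) ^ ((T.1.filter (fun a => LO.lt a t.1)).card)) *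
      (Ideal.Quotient.mk I (X t.1) *
        f ⟨insert t.1 T.1, by
          rw [Finset.card_insert_of_notMem (Finset.mem_sdiff.mp t.2).2, T.2]⟩)

/-- Being a cycle in the Koszul complex. -/
def isCycle (I : Ideal (MvPolynomial σ K)) : (i : ℕ) → KC K I i → Prop
  | 0, _ => True
  | (i + 1), f => koszD K I i f = 0

/-- Nonvanishing of the graded Betti number `β_{i,j}(R/I)`: the `i`-th Koszul homology has a
nonzero class of internal degree `j`. -/
def bettiNe (I : Ideal (MvPolynomial σ K)) (i j : ℕ) : Prop :=
  ∃ f : KC K I i,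
    (∀ T, ∃ p : MvPolynomial σ K, p.IsHomogeneous (j - i) ∧ Ideal.Quotient.mk I p = f T) ∧
    isCycle K I i f ∧ ¬ ∃ g : KC K I (i + 1), koszD K I i g = f

/-- The Castelnuovo-Mumford regularity of `R/I`, as `max { j - i : β_{i,j}(R/I) ≠ 0 }`. -/
def reg (I : Ideal (MvPolynomial σ K)) : ℕ :=
  sSup {r : ℕ | ∃ i j : ℕ, j = i + r ∧ bettiNe K I i j}

end Regularity

end

end Paper

namespace Paper

noncomputable section

variable (K : Type) [Field K]

/-- Rank of variables for the lex order `x_1 > ⋯ > x_n > y_1 > ⋯ > y_n`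
(smaller rank = higher priority). -/
def vrank {n : ℕ} : (Fin n ⊕ Fin n) → ℕ :=
  Sum.elim (fun i => (i : ℕ)) (fun i => n + (i : ℕ))

/-- Lexicographic comparison of monomials with respect to
`x_1 > ⋯ > x_n > y_1 > ⋯ > y_n`. -/
def monLt {n : ℕ} (a b : (Fin n ⊕ Fin n) →₀ ℕ) : Prop :=
  ∃ u, (∀ v, vrank v < vrank u → a v = b v) ∧ a u < b u

/-- `d` is the exponent of the leading monomial of `f` with respect to lex. -/
def IsLeadMon {n : ℕ} (f : MvPolynomial (Fin n ⊕ Fin n) K)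
    (d : (Fin n ⊕ Fin n) →₀ ℕ) : Prop :=
  d ∈ f.support ∧ ∀ e ∈ f.support, e ≠ d → monLt e d

/-- The initial ideal of `I` with respect to lex. -/
def initIdeal {n : ℕ} (I : Ideal (MvPolynomial (Fin n ⊕ Fin n) K)) :
    Ideal (MvPolynomial (Fin n ⊕ Fin n) K) :=
  Ideal.span {p | ∃ f ∈ I, ∃ d, IsLeadMon K f d ∧ p = monomial d (1 : K)}

/-! Divide `f` by all nonzero elements of `J_G` with respect to lex. The remainder `r` satisfies
`f ≡ r (mod J_G)`, hence `(J_G : r) = (J_G : f)`, and no monomial of `r` is divisible by a leading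
monomial of `J_G`, i.e. lies in `in_<(J_G)`. Since `J_G` is homogeneous, the degree-`m` component of
`r` keeps both properties. -/

lemma colon_span_singleton_eq_of_sub_mem {R : Type*} [CommRing R] {I : Ideal R} {f g : R}
    (h : f - g ∈ I) : I.colon (Ideal.span {f}) = I.colon (Ideal.span {g}) := by
  ext r
  have hdiff : r * f - r * g ∈ I := by
    rw [← mul_sub]
    exact I.mul_mem_left r h
  simp only [Ideal.mem_colon_span_singleton]
  exact ⟨fun hf => (I.sub_mem_iff_right hf).mp hdiff, fun hg => (I.sub_mem_iff_left hg).mp hdiff⟩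

open scoped MonomialOrder

attribute [local instance] MvPolynomial.gradedAlgebra

section NormalForm

variable {σ R : Type*} [Field R] (m : MonomialOrder σ)

lemma exists_sub_mem_forall_not_degree_le (I : Ideal (MvPolynomial σ R))
    (f : MvPolynomial σ R) :
    ∃ r, f - r ∈ I ∧ ∀ c ∈ r.support, ∀ b ∈ I, b ≠ 0 → ¬ m.degree b ≤ c := by
  obtain ⟨q, r, hfr, -, hr⟩ := m.div_set (B := {b | b ∈ I ∧ b ≠ 0})
    (fun b hb => (m.leadingCoeff_ne_zero_iff.mpr hb.2).isUnit) f
  refine ⟨r, ?_, fun c hc b hb hb0 => hr c hc b ⟨hb, hb0⟩⟩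
  rw [hfr, add_sub_cancel_right, Finsupp.linearCombination_apply]
  exact Submodule.finsuppSum_mem _ _ _ _ fun b _ => I.mul_mem_left _ b.2.1

lemma exists_isHomogeneous_sub_mem_forall_not_degree_le {I : Ideal (MvPolynomial σ R)}
    (hI : I.IsHomogeneous (homogeneousSubmodule σ R)) {f : MvPolynomial σ R} {d : ℕ}
    (hf : f.IsHomogeneous d) :
    ∃ r, r.IsHomogeneous d ∧ f - r ∈ I ∧
      ∀ c ∈ r.support, ∀ b ∈ I, b ≠ 0 → ¬ m.degree b ≤ c := by
  obtain ⟨r, hfr, hr⟩ := exists_sub_mem_forall_not_degree_le m I f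
  refine ⟨homogeneousComponent d r, homogeneousComponent_isHomogeneous d r, ?_,
    fun c hc => hr c (Finset.mem_filter.mp (support_homogeneousComponent d r ▸ hc)).1⟩
  rw [← homogeneousComponent_eq_self hf, ← map_sub]
  exact homogeneousComponent_mem_of_mem hI hfr d

end NormalForm

lemma beIdeal_isHomogeneous {V : Type} (G : SimpleGraph V) :
    (beIdeal K G).IsHomogeneous (homogeneousSubmodule (V ⊕ V) K) := by
  apply Ideal.homogeneous_span
  rintro _ ⟨i, j, -, rfl⟩
  exact ⟨2, ((isHomogeneous_X _ _).mul (isHomogeneous_X _ _)).sub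
    ((isHomogeneous_X _ _).mul (isHomogeneous_X _ _))⟩

lemma vrank_injective {n : ℕ} : Function.Injective (vrank (n := n)) := by
  rintro (a | a) (b | b) h <;> simp only [vrank, Sum.elim_inl, Sum.elim_inr] at h
  · exact congrArg Sum.inl (Fin.ext h)
  · omega
  · omega
  · exact congrArg Sum.inr (Fin.ext (by omega))

/-- The paper's lex order: variables of smaller `vrank` come first. -/
def lexVrank (n : ℕ) : MonomialOrder (Fin n ⊕ Fin n) :=
  let vrankOrder : LinearOrder (Fin n ⊕ Fin n) := LinearOrder.lift' vrank vrank_injective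
  @MonomialOrder.lex _ vrankOrder (@Finite.to_wellFoundedGT _ _ vrankOrder.toPreorder)

lemma monLt_iff {n : ℕ} {a b : (Fin n ⊕ Fin n) →₀ ℕ} : monLt a b ↔ a ≺[lexVrank n] b :=
  Iff.rfl

lemma IsLeadMon.ne_zero {n : ℕ} {f : MvPolynomial (Fin n ⊕ Fin n) K}
    {d : (Fin n ⊕ Fin n) →₀ ℕ} (h : IsLeadMon K f d) : f ≠ 0 := by
  rintro rfl
  simp [IsLeadMon] at h

lemma IsLeadMon.degree_eq {n : ℕ} {f : MvPolynomial (Fin n ⊕ Fin n) K}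
    {d : (Fin n ⊕ Fin n) →₀ ℕ} (h : IsLeadMon K f d) : (lexVrank n).degree f = d := by
  by_contra hne
  have hlt := monLt_iff.mp (h.2 _ ((lexVrank n).degree_mem_support_iff f |>.mpr h.ne_zero) hne)
  exact not_le_of_gt hlt ((lexVrank n).le_degree h.1)

lemma exists_degree_le_of_monomial_mem_initIdeal {n : ℕ}
    {I : Ideal (MvPolynomial (Fin n ⊕ Fin n) K)} {d : (Fin n ⊕ Fin n) →₀ ℕ}
    (h : monomial d (1 : K) ∈ initIdeal K I) :
    ∃ b ∈ I, b ≠ 0 ∧ (lexVrank n).degree b ≤ d := by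
  have hspan : initIdeal K I =
      Ideal.span ((fun s => monomial s (1 : K)) '' {s | ∃ b ∈ I, IsLeadMon K b s}) := by
    unfold initIdeal
    congr 1
    ext p
    exact ⟨fun ⟨b, hb, s, hs, hp⟩ => ⟨s, ⟨b, hb, hs⟩, hp.symm⟩,
      fun ⟨s, ⟨b, hb, hs⟩, hp⟩ => ⟨b, hb, s, hs, hp.symm⟩⟩
  rw [hspan, mem_ideal_span_monomial_image] at h
  obtain ⟨s, ⟨b, hb, hs⟩, hsd⟩ := h d (by simp)
  exact ⟨b, hb, hs.ne_zero, hs.degree_eq ▸ hsd⟩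

theorem statement_0 {n m : ℕ} (G : SimpleGraph (Fin n))
    (f : MvPolynomial (Fin n ⊕ Fin n) K) (hf : f.IsHomogeneous m)
    (P : Ideal (MvPolynomial (Fin n ⊕ Fin n) K))
    (hcol : Submodule.colon (beIdeal K G) (Ideal.span {f}) = P) :
    ∃ g : MvPolynomial (Fin n ⊕ Fin n) K, g.IsHomogeneous m ∧
      (∀ d, IsLeadMon K g d → (monomial d (1 : K)) ∉ initIdeal K (beIdeal K G)) ∧
      Submodule.colon (beIdeal K G) (Ideal.span {g}) = P := by
  obtain ⟨g, hg, hfg, hnf⟩ := exists_isHomogeneous_sub_mem_forall_not_degree_le (lexVrank n)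
    (beIdeal_isHomogeneous K G) hf
  refine ⟨g, hg, fun d hd hinit => ?_, ?_⟩
  · obtain ⟨b, hb, hb0, hbd⟩ := exists_degree_le_of_monomial_mem_initIdeal K hinit
    exact hnf d hd.1 b hb hb0 hbd
  · rw [← hcol]
    exact colon_span_singleton_eq_of_sub_mem (sub_mem_comm_iff.mp hfg)

end

end Paper
end

section
/- Let $G$ be a connected graph that is not a cone graph. If there exist adjacent vertices $u,v$ with $N_G(u)\cup N_G(v)=V(G)$, then $\mathrm{v}(J_G)=2$. -/
open MvPolynomial

set_option synthInstance.maxHeartbeats 1000000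

/-!
For `f = x_u y_v` the dominating edge `uv` gives `f · J_{K_n} ⊆ J_G`: each `f_ij` is caught by a
common neighbour `u` or `v` of `i` and `j`, or by the path `i - u - v - j`. The toric map
`x_i ↦ s t_i, y_i ↦ s' t_i` kills `J_G` but not `f`, and its kernel is `J_{K_n}`, since monomials
with the same image differ by a chain of swaps `x_i y_j ↔ x_j y_i`. Hence `J_G : f = J_{K_n}` is
prime, and `v(J_G) ≤ 2`.

Conversely, let `J_G : ℓ` be prime for a linear form `ℓ` involving a variable of the vertex `w`.
It contains no variable, so it contains `f_tc` whenever `t, c` are non-adjacent with a common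
neighbour; the generic point of the prime of the cut set `N(t)` then forces `t ~ w`. As `G` is not
a cone, some such `t` is not adjacent to `w`. A constant `f` reduces to this case, because
`J_G : x f = J_G : f` for a variable `x ∉ J_G : f`.
-/

namespace Ideal

section CommSemiring

variable {R : Type*} [CommSemiring R] {I : Ideal R} {f g : R}

theorem colon_span_singleton_le_ker {D : Type*} [Semiring D] [NoZeroDivisors D] (φ : R →+* D)
    (hI : I ≤ RingHom.ker φ) (hf : φ f ≠ 0) : I.colon (span {f} : Set R) ≤ RingHom.ker φ := by
  intro r hr
  have : φ r * φ f = 0 := by rw [← map_mul]; exact hI (mem_colon_span_singleton.mp hr)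
  exact (mul_eq_zero.mp this).resolve_right hf

theorem colon_span_singleton_mul_eq_of_notMem (hP : (I.colon (span {f} : Set R)).IsPrime)
    (hg : g ∉ I.colon (span {f} : Set R)) :
    I.colon (span {g * f} : Set R) = I.colon (span {f} : Set R) := by
  ext r
  rw [mem_colon_span_singleton, ← mul_assoc, ← mem_colon_span_singleton,
    hP.mul_mem_iff_mem_or_mem, or_iff_left hg]

theorem notMem_of_isPrime_colon_span_singleton (hP : (I.colon (span {f} : Set R)).IsPrime) :
    f ∉ I := fun hf =>
  hP.ne_top ((eq_top_iff_one _).mpr (mem_colon_span_singleton.mpr (by simpa using hf)))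

end CommSemiring

theorem isAssociatedPrime_colon_span_singleton_iff {R : Type*} [CommRing R] {I : Ideal R} {f : R} :
    IsAssociatedPrime (I.colon (span {f} : Set R)) (R ⧸ I) ↔
      (I.colon (span {f} : Set R)).IsPrime := by
  refine ⟨fun h => h.isPrime, fun h => ⟨h, Quotient.mk I f, ?_⟩⟩
  have : (⊥ : Submodule R (R ⧸ I)).colon {Quotient.mk I f} = I.colon (span {f} : Set R) := by
    ext r
    rw [Submodule.mem_colon_singleton, Submodule.mem_bot, Algebra.smul_def,
      Quotient.algebraMap_eq, ← map_mul, Quotient.eq_zero_iff_mem, mem_colon_span_singleton]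
  rw [this, h.radical]

end Ideal

namespace MvPolynomial.IsHomogeneous

theorem eval_piSingle_one {σ R : Type*} [CommSemiring R] [DecidableEq σ]
    {f : MvPolynomial σ R} (hf : f.IsHomogeneous 1) (z : σ) :
    eval (Pi.single z 1) f = coeff (Finsupp.single z 1) f := by
  have hf' : f ∈ Submodule.span R (Set.range X) := by
    rw [← homogeneousSubmodule_one_eq_span_X]; exact hf
  clear hf
  induction hf' using Submodule.span_induction with
  | mem _ h =>
    obtain ⟨w, rfl⟩ := h
    by_cases hw : w = z
    · subst hw; simp
    · simp [hw, coeff_X, Finsupp.single_left_inj one_ne_zero]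
  | zero => simp
  | add _ _ _ _ h₁ h₂ => simp [h₁, h₂]
  | smul _ _ _ h => simp [h]

theorem exists_coeff_single_ne_zero {σ R : Type*} [CommSemiring R]
    {f : MvPolynomial σ R} (hf : f.IsHomogeneous 1) (h0 : f ≠ 0) :
    ∃ z, coeff (Finsupp.single z 1) f ≠ 0 := by
  obtain ⟨d, hd⟩ := exists_coeff_ne_zero h0
  have : d ∈ Set.range (fun z : σ => Finsupp.single z 1) := by
    rw [Finsupp.range_single_one, Set.mem_ofPred_eq, Finsupp.degree_eq_weight_one]; exact hf hd
  obtain ⟨z, rfl⟩ := this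
  exact ⟨z, hd⟩

end MvPolynomial.IsHomogeneous

namespace Paper

variable (K : Type) [Field K]

section EdgeBinomials

variable {K} {V : Type} {G : SimpleGraph V}

theorem bedge_mem_beIdeal {i j : V} (h : G.Adj i j) : bedge K i j ∈ beIdeal K G :=
  Ideal.subset_span ⟨i, j, h, rfl⟩

theorem bedge_swap (i j : V) : bedge K j i = -bedge K i j := by
  unfold bedge; ring

theorem X_inl_mul_bedge_mem_beIdeal {a b w : V} (ha : G.Adj a w) (hb : G.Adj b w) :
    X (Sum.inl w) * bedge K a b ∈ beIdeal K G := by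
  have : X (Sum.inl w) * bedge K a b
      = X (Sum.inl b) * bedge K a w - X (Sum.inl a) * bedge K b w := by
    unfold bedge; ring
  rw [this]
  exact sub_mem (Ideal.mul_mem_left _ _ (bedge_mem_beIdeal ha))
    (Ideal.mul_mem_left _ _ (bedge_mem_beIdeal hb))

theorem X_inr_mul_bedge_mem_beIdeal {a b w : V} (ha : G.Adj a w) (hb : G.Adj b w) :
    X (Sum.inr w) * bedge K a b ∈ beIdeal K G := by
  have : X (Sum.inr w) * bedge K a b
      = X (Sum.inr b) * bedge K a w - X (Sum.inr a) * bedge K b w := by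
    unfold bedge; ring
  rw [this]
  exact sub_mem (Ideal.mul_mem_left _ _ (bedge_mem_beIdeal ha))
    (Ideal.mul_mem_left _ _ (bedge_mem_beIdeal hb))

theorem X_inl_mul_X_inr_mul_bedge_mem_beIdeal_of_path {a b u v : V} (ha : G.Adj a u)
    (huv : G.Adj u v) (hb : G.Adj b v) :
    X (Sum.inl u) * X (Sum.inr v) * bedge K a b ∈ beIdeal K G := by
  have : X (Sum.inl u) * X (Sum.inr v) * bedge K a b
      = X (Sum.inl b) * X (Sum.inr v) * bedge K a u
        + X (Sum.inl a) * X (Sum.inr b) * bedge K u v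
        - X (Sum.inl a) * X (Sum.inr u) * bedge K b v := by
    unfold bedge; ring
  rw [this]
  exact sub_mem (add_mem (Ideal.mul_mem_left _ _ (bedge_mem_beIdeal ha))
    (Ideal.mul_mem_left _ _ (bedge_mem_beIdeal huv)))
    (Ideal.mul_mem_left _ _ (bedge_mem_beIdeal hb))

theorem X_inl_mul_X_inr_mul_bedge_mem_beIdeal {u v : V} (huv : G.Adj u v)
    (hN : ∀ w, G.Adj u w ∨ G.Adj v w) (i j : V) :
    X (Sum.inl u) * X (Sum.inr v) * bedge K i j ∈ beIdeal K G := by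
  rcases hN i with hi | hi <;> rcases hN j with hj | hj
  · rw [mul_comm (X _), mul_assoc]
    exact Ideal.mul_mem_left _ _ (X_inl_mul_bedge_mem_beIdeal hi.symm hj.symm)
  · exact X_inl_mul_X_inr_mul_bedge_mem_beIdeal_of_path hi.symm huv hj.symm
  · rw [← neg_neg (bedge K i j), ← bedge_swap, mul_neg]
    exact neg_mem (X_inl_mul_X_inr_mul_bedge_mem_beIdeal_of_path hj.symm huv hi.symm)
  · rw [mul_assoc]
    exact Ideal.mul_mem_left _ _ (X_inr_mul_bedge_mem_beIdeal hi.symm hj.symm)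

end EdgeBinomials

theorem exists_pair_with_common_neighbor_not_adj {V : Type} {G : SimpleGraph V} {u v : V}
    (huv : G.Adj u v) (hN : ∀ w, G.Adj u w ∨ G.Adj v w) (hcone : ¬ IsConeGraph G) (w : V) :
    ∃ t c r, c ≠ t ∧ ¬ G.Adj t c ∧ G.Adj t r ∧ G.Adj c r ∧ ¬ G.Adj t w := by
  simp only [IsConeGraph, not_exists, not_forall, exists_prop] at hcone
  by_contra! h
  obtain ⟨a, hau, hua⟩ := hcone u
  obtain ⟨b, hbv, hvb⟩ := hcone v
  obtain ⟨c, hcw, hwc⟩ := hcone w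
  have hwu := h u a v hau hua huv ((hN a).resolve_left hua).symm
  have hwv := h v b u hbv hvb huv.symm ((hN b).resolve_right hvb).symm
  rcases hN c with hc | hc
  · exact G.loopless.irrefl w (h w c u hcw hwc hwu.symm hc.symm)
  · exact G.loopless.irrefl w (h w c v hcw hwc hwv.symm hc.symm)

section ComponentHom

variable {K} {V ι : Type}

variable (K) in
open Classical in
/-- `x_i ↦ s_{χ i} t_i`, `y_i ↦ s'_{χ i} t_i`, with `x_i, y_i ↦ 0` for `i ∈ S`, where `s_a, s'_a, t_i`
are `X (inl (a, false))`, `X (inl (a, true))`, `X (inr i)`. When `χ` labels the components of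
`G ∖ S`, this is the generic point of the prime `P_S(G)`. -/
noncomputable def componentHom (S : Set V) (χ : V → ι) :
    MvPolynomial (V ⊕ V) K →+* MvPolynomial ((ι × Bool) ⊕ V) K :=
  eval₂Hom C (Sum.elim
    (fun i => if i ∈ S then 0 else X (Sum.inl (χ i, false)) * X (Sum.inr i))
    (fun i => if i ∈ S then 0 else X (Sum.inl (χ i, true)) * X (Sum.inr i)))

theorem componentHom_bedge_eq_zero {S : Set V} {χ : V → ι} {i j : V}
    (h : i ∈ S ∨ j ∈ S ∨ χ i = χ j) : componentHom K S χ (bedge K i j) = 0 := by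
  classical
  simp only [componentHom, bedge, coe_eval₂Hom, eval₂_sub, eval₂_mul, eval₂_X, Sum.elim_inl,
    Sum.elim_inr]
  rcases h with h | h | h
  · simp [h]
  · simp [h]
  · rw [h]; split_ifs <;> ring

theorem beIdeal_le_ker_componentHom {G : SimpleGraph V} {S : Set V} {χ : V → ι}
    (h : ∀ i j, G.Adj i j → i ∈ S ∨ j ∈ S ∨ χ i = χ j) :
    beIdeal K G ≤ RingHom.ker (componentHom K S χ) := by
  rw [beIdeal, Ideal.span_le]
  rintro _ ⟨i, j, hij, rfl⟩
  exact componentHom_bedge_eq_zero (h i j hij)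

theorem beIdeal_le_ker_componentHom_empty {G : SimpleGraph V} :
    beIdeal K G ≤ RingHom.ker (componentHom K (∅ : Set V) (fun _ => ())) :=
  beIdeal_le_ker_componentHom fun _ _ _ => Or.inr (Or.inr rfl)

theorem beIdeal_le_ker_componentHom_neighborSet (G : SimpleGraph V) (t : V) :
    beIdeal K G ≤ RingHom.ker (componentHom K (G.neighborSet t) (· = t)) :=
  beIdeal_le_ker_componentHom fun i j hij => by
    by_cases hi : i = t
    · subst hi; exact Or.inr (Or.inl hij)
    · by_cases hj : j = t
      · subst hj; exact Or.inl hij.symm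
      · simp [hi, hj]

theorem componentHom_bedge_ne_zero {S : Set V} {χ : V → ι} {i j : V} (hi : i ∉ S) (hj : j ∉ S)
    (hχ : χ i ≠ χ j) : componentHom K S χ (bedge K i j) ≠ 0 := by
  classical
  intro h
  have := congrArg (eval (Sum.elim (fun p => if p = (χ i, false) ∨ p = (χ j, true) then 1 else 0)
    (fun _ => (1 : K)))) h
  simp [componentHom, bedge, hi, hj, hχ, hχ.symm] at this

open Classical in
theorem eval_comp_componentHom (S : Set V) (χ : V → ι) {z : V ⊕ V} (hz : Sum.elim id id z ∉ S) :
    (eval (Sum.elim (fun p => if p.2 = z.isRight then 1 else 0)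
      (Pi.single (Sum.elim id id z) 1))).comp (componentHom K S χ) = eval (Pi.single z 1) := by
  refine ringHom_ext (fun c => by simp [componentHom]) (fun w => ?_)
  cases w <;> cases z <;> simp [componentHom, Pi.single_apply] at hz ⊢ <;> split_ifs <;> simp_all

theorem componentHom_ne_zero {S : Set V} (χ : V → ι) {f : MvPolynomial (V ⊕ V) K}
    (hf : f.IsHomogeneous 1) {z : V ⊕ V} (hz : Sum.elim id id z ∉ S)
    (hc : coeff (Finsupp.single z 1) f ≠ 0) : componentHom K S χ f ≠ 0 := by
  classical
  intro h
  apply hc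
  rw [← hf.eval_piSingle_one, ← eval_comp_componentHom S χ hz, RingHom.comp_apply, h, map_zero]

theorem componentHom_X_ne_zero {S : Set V} (χ : V → ι) {z : V ⊕ V} (hz : Sum.elim id id z ∉ S) :
    componentHom K S χ (X z) ≠ 0 :=
  componentHom_ne_zero χ (isHomogeneous_X K z) hz (by simp)

end ComponentHom

section Toric

variable {K} {V : Type}

noncomputable def toricExponent : (V ⊕ V →₀ ℕ) →ₗ[ℕ] ((Unit × Bool) ⊕ V →₀ ℕ) :=
  Finsupp.linearCombination ℕ (Sum.elim
    (fun i => Finsupp.single (Sum.inl ((), false)) 1 + Finsupp.single (Sum.inr i) 1)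
    (fun i => Finsupp.single (Sum.inl ((), true)) 1 + Finsupp.single (Sum.inr i) 1))

theorem componentHom_empty_monomial (m : V ⊕ V →₀ ℕ) (c : K) :
    componentHom K (∅ : Set V) (fun _ => ()) (monomial m c) = monomial (toricExponent m) c := by
  rw [toricExponent, Finsupp.linearCombination_apply, monomial_finsupp_sum_index, componentHom,
    coe_eval₂Hom, eval₂_monomial]
  congr 1
  refine Finsupp.prod_congr fun z _ => ?_
  cases z <;> simp [X, monomial_mul, monomial_pow]

theorem monomial_sub_monomial_swap (r : V ⊕ V →₀ ℕ) (i j : V) :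
    monomial (r + Finsupp.single (Sum.inl i) 1 + Finsupp.single (Sum.inr j) 1) (1 : K)
      - monomial (r + Finsupp.single (Sum.inl j) 1 + Finsupp.single (Sum.inr i) 1) 1
      = monomial r 1 * bedge K i j := by
  simp only [bedge, X, mul_sub, monomial_mul, mul_one, add_assoc]

theorem toricExponent_swap (r : V ⊕ V →₀ ℕ) (i j : V) :
    toricExponent (r + Finsupp.single (Sum.inl i) 1 + Finsupp.single (Sum.inr j) 1)
      = toricExponent (r + Finsupp.single (Sum.inl j) 1 + Finsupp.single (Sum.inr i) 1) := by
  simp only [map_add, toricExponent, Finsupp.linearCombination_single, one_smul, Sum.elim_inl,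
    Sum.elim_inr]
  abel

variable [Fintype V]

theorem toricExponent_apply_inl (m : V ⊕ V →₀ ℕ) :
    toricExponent m (Sum.inl ((), false)) = ∑ i, m (Sum.inl i) := by
  simp [toricExponent, Finsupp.linearCombination_apply, Finsupp.sum_fintype, Fintype.sum_sum_type]

theorem toricExponent_apply_inr (m : V ⊕ V →₀ ℕ) (i : V) :
    toricExponent m (Sum.inr i) = m (Sum.inl i) + m (Sum.inr i) := by
  classical
  simp [toricExponent, Finsupp.linearCombination_apply, Finsupp.sum_fintype, Fintype.sum_sum_type,
    Finsupp.single_apply]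

theorem monomial_sub_monomial_mem_of_toricExponent_eq {m m' : V ⊕ V →₀ ℕ}
    (h : toricExponent m = toricExponent m') :
    monomial m (1 : K) - monomial m' 1 ∈ beIdeal K (⊤ : SimpleGraph V) := by
  classical
  -- A swap `x_i y_j ↦ x_j y_i` moves one unit of `x`-degree from a vertex `i` where `m` exceeds
  -- `m'` to a vertex `j` where it falls short.
  induction hn : ∑ i, (m (Sum.inl i) - m' (Sum.inl i)) using Nat.strong_induction_on
    generalizing m with
  | _ n ih =>
  have hx : ∑ i, m (Sum.inl i) = ∑ i, m' (Sum.inl i) := by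
    simpa [toricExponent_apply_inl] using congrArg (· (Sum.inl ((), false))) h
  have hc (i : V) : m (Sum.inl i) + m (Sum.inr i) = m' (Sum.inl i) + m' (Sum.inr i) := by
    simpa [toricExponent_apply_inr] using congrArg (· (Sum.inr i)) h
  by_cases hex : ∃ i, m' (Sum.inl i) < m (Sum.inl i)
  · obtain ⟨i, hi⟩ := hex
    obtain ⟨j, hj⟩ : ∃ j, m (Sum.inl j) < m' (Sum.inl j) := by
      by_contra! hle
      exact (Finset.sum_lt_sum (fun j _ => hle j) ⟨i, Finset.mem_univ _, hi⟩).ne' hx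
    have hij : i ≠ j := by rintro rfl; omega
    have hcj := hc j
    obtain ⟨r, rfl⟩ : ∃ r, m = r + Finsupp.single (Sum.inl i) 1 + Finsupp.single (Sum.inr j) 1 := by
      refine ⟨m - Finsupp.single (Sum.inl i) 1 - Finsupp.single (Sum.inr j) 1, ?_⟩
      ext (k | k) <;> simp only [Finsupp.add_apply, Finsupp.tsub_apply, Finsupp.single_apply,
        Sum.inl.injEq, Sum.inr.injEq, reduceCtorEq, if_false] <;> split_ifs <;> subst_vars <;> omega
    set m₂ : V ⊕ V →₀ ℕ := r + Finsupp.single (Sum.inl j) 1 + Finsupp.single (Sum.inr i) 1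
      with hm₂
    have hlt : ∑ k, (m₂ (Sum.inl k) - m' (Sum.inl k)) < n := by
      rw [← hn, hm₂]
      refine Finset.sum_lt_sum (fun k _ => ?_) ⟨i, Finset.mem_univ _, ?_⟩ <;>
      simp only [Finsupp.add_apply, Finsupp.single_apply, Sum.inl.injEq, reduceCtorEq, if_false]
        at hi hj ⊢ <;> split_ifs at hi hj ⊢ <;> subst_vars <;> omega
    have hswap : monomial (r + Finsupp.single (Sum.inl i) 1 + Finsupp.single (Sum.inr j) 1) (1 : K)
        - monomial m₂ 1 ∈ beIdeal K (⊤ : SimpleGraph V) := by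
      rw [hm₂, monomial_sub_monomial_swap]
      exact Ideal.mul_mem_left _ _ (bedge_mem_beIdeal hij)
    have := add_mem hswap (ih _ hlt ((toricExponent_swap r i j).symm.trans h) rfl)
    rwa [sub_add_sub_cancel] at this
  · simp only [not_exists, not_lt] at hex
    have hinl := (Finset.sum_eq_sum_iff_of_le fun i _ => hex i).mp hx
    obtain rfl : m = m' := by
      ext (k | k)
      · exact hinl k (Finset.mem_univ _)
      · have := hinl k (Finset.mem_univ _); have := hc k; omega
    simp

theorem ker_componentHom_empty_le_beIdeal_top :
    RingHom.ker (componentHom K (∅ : Set V) (fun _ => ())) ≤ beIdeal K (⊤ : SimpleGraph V) := by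
  intro g hg
  -- Replacing each monomial by a fixed representative of its fibre changes `p` only modulo
  -- `J_{K_n}`, and turns `p` into `0` when its image vanishes.
  let rep := Function.invFun (toricExponent (V := V))
  have key (p : MvPolynomial (V ⊕ V) K) : p - AddMonoidAlgebra.mapDomain rep
      (componentHom K (∅ : Set V) (fun _ => ()) p) ∈ beIdeal K (⊤ : SimpleGraph V) := by
    induction p using MvPolynomial.induction_on' with
    | monomial m c =>
      rw [componentHom_empty_monomial, ← single_eq_monomial (toricExponent m),
        AddMonoidAlgebra.mapDomain_single, single_eq_monomial]
      have := monomial_sub_monomial_mem_of_toricExponent_eq (K := K)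
        (Function.invFun_eq (f := toricExponent) ⟨m, rfl⟩).symm
      have := Ideal.mul_mem_left _ (C c) this
      rwa [mul_sub, C_mul_monomial, C_mul_monomial, mul_one] at this
    | add p q hp hq =>
      rw [map_add, AddMonoidAlgebra.mapDomain_add, add_sub_add_comm]
      exact add_mem hp hq
  simpa [RingHom.mem_ker.mp hg] using key g

end Toric

section VNumber

variable {K} {V : Type} {G : SimpleGraph V} {u v : V}

theorem colon_X_inl_mul_X_inr_eq_ker [Fintype V] (huv : G.Adj u v)
    (hN : ∀ w, G.Adj u w ∨ G.Adj v w) :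
    (beIdeal K G).colon (Ideal.span {(X (Sum.inl u) * X (Sum.inr v) : MvPolynomial (V ⊕ V) K)})
      = RingHom.ker (componentHom K (∅ : Set V) (fun _ => ())) := by
  refine le_antisymm (Ideal.colon_span_singleton_le_ker _ beIdeal_le_ker_componentHom_empty ?_) ?_
  · rw [map_mul]
    exact mul_ne_zero (componentHom_X_ne_zero _ (Set.notMem_empty _))
      (componentHom_X_ne_zero _ (Set.notMem_empty _))
  · refine ker_componentHom_empty_le_beIdeal_top.trans ?_
    rw [beIdeal, Ideal.span_le]
    rintro _ ⟨i, j, -, rfl⟩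
    rw [SetLike.mem_coe, Ideal.mem_colon_span_singleton, mul_comm]
    exact X_inl_mul_X_inr_mul_bedge_mem_beIdeal huv hN i j

theorem not_isPrime_colon_of_isHomogeneous_one (huv : G.Adj u v) (hN : ∀ w, G.Adj u w ∨ G.Adj v w)
    (hcone : ¬ IsConeGraph G) {f : MvPolynomial (V ⊕ V) K} (hf : f.IsHomogeneous 1) :
    ¬ ((beIdeal K G).colon (Ideal.span {f})).IsPrime := by
  intro hQ
  obtain ⟨z, hz⟩ := hf.exists_coeff_single_ne_zero
    (by rintro rfl; exact Ideal.notMem_of_isPrime_colon_span_singleton hQ (zero_mem _))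
  have hXQ (r : V) : X (Sum.inl r) ∉ (beIdeal K G).colon (Ideal.span {f}) := fun h =>
    componentHom_X_ne_zero _ (Set.notMem_empty _) (Ideal.colon_span_singleton_le_ker _
      beIdeal_le_ker_componentHom_empty (componentHom_ne_zero _ hf (Set.notMem_empty _) hz) h)
  have hcommon {p q r : V} (hp : G.Adj p r) (hq : G.Adj q r) :
      bedge K p q ∈ (beIdeal K G).colon (Ideal.span {f}) :=
    (hQ.mem_or_mem (Ideal.le_colon (X_inl_mul_bedge_mem_beIdeal hp hq))).resolve_left (hXQ r)
  have hadj {t c : V} (hct : c ≠ t) (htc : ¬ G.Adj t c)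
      (h : bedge K t c ∈ (beIdeal K G).colon (Ideal.span {f})) :
      G.Adj t (Sum.elim id id z) := by
    by_contra hw
    refine componentHom_ne_zero _ hf hw hz (Ideal.colon_span_singleton_le_ker _
      (beIdeal_le_ker_componentHom_neighborSet G t)
      (componentHom_bedge_ne_zero (G.loopless.irrefl t) htc (by simpa using hct)) ?_)
    rw [Ideal.mem_colon_span_singleton, mul_comm]
    exact Ideal.mem_colon_span_singleton.mp h
  obtain ⟨t, c, r, hct, htc, htr, hcr, htz⟩ :=
    exists_pair_with_common_neighbor_not_adj huv hN hcone (Sum.elim id id z)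
  exact htz (hadj hct htc (hcommon htr hcr))

theorem not_isPrime_colon_of_isHomogeneous_zero (huv : G.Adj u v)
    (hN : ∀ w, G.Adj u w ∨ G.Adj v w) (hcone : ¬ IsConeGraph G) {f : MvPolynomial (V ⊕ V) K}
    (hf : f.IsHomogeneous 0) : ¬ ((beIdeal K G).colon (Ideal.span {f})).IsPrime := by
  intro hQ
  have hfC := totalDegree_eq_zero_iff_eq_C.mp ((totalDegree_zero_iff_isHomogeneous _).mpr hf)
  have hφf : componentHom K (∅ : Set V) (fun _ => ()) f ≠ 0 := by
    have hf0 : f ≠ 0 := by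
      rintro rfl; exact Ideal.notMem_of_isPrime_colon_span_singleton hQ (zero_mem _)
    rw [hfC] at hf0 ⊢
    simpa [componentHom] using hf0
  have hX : X (Sum.inl u) ∉ (beIdeal K G).colon (Ideal.span {f}) := fun h =>
    componentHom_X_ne_zero _ (Set.notMem_empty _) (Ideal.colon_span_singleton_le_ker _
      beIdeal_le_ker_componentHom_empty hφf h)
  refine not_isPrime_colon_of_isHomogeneous_one huv hN hcone
    ((isHomogeneous_X K (Sum.inl u)).mul hf) ?_
  rwa [Ideal.colon_span_singleton_mul_eq_of_notMem hQ hX]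

end VNumber

theorem statement_6 {V : Type} [Fintype V] (G : SimpleGraph V)
    (hcone : ¬ IsConeGraph G) (u v : V) (huv : G.Adj u v)
    (hN : G.neighborSet u ∪ G.neighborSet v = Set.univ) :
    vNumber K (beIdeal K G) = 2 := by
  have hN' (w : V) : G.Adj u w ∨ G.Adj v w := Set.eq_univ_iff_forall.mp hN w
  simp only [vNumber, Ideal.isAssociatedPrime_colon_span_singleton_iff]
  have h2 : 2 ∈ {d | ∃ f : MvPolynomial (V ⊕ V) K, f.IsHomogeneous d ∧
      ((beIdeal K G).colon (Ideal.span {f})).IsPrime} :=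
    ⟨_, (isHomogeneous_X K _).mul (isHomogeneous_X K _),
      by rw [colon_X_inl_mul_X_inr_eq_ker huv hN']; exact RingHom.ker_isPrime _⟩
  refine le_antisymm (Nat.sInf_le h2) (le_csInf ⟨2, h2⟩ ?_)
  rintro d ⟨f, hf, hP⟩
  by_contra! hd
  interval_cases d
  · exact not_isPrime_colon_of_isHomogeneous_zero huv hN' hcone hf hP
  · exact not_isPrime_colon_of_isHomogeneous_one huv hN' hcone hf hP

end Paper
end

section
/- Let $G=K_n$ be a complete graph ($n\ge 2$) with binomial edge ideal $J_G$. Then for every $k\ge 1$, the v-number satisfies $\mathrm{v}(J_G^k)=2k-2$; concretely, for any edge binomial $f=x_iy_j-x_jy_i$, $(J_G^k : f^{k-1})=J_G$. -/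
open MvPolynomial

set_option synthInstance.maxHeartbeats 1000000

/-!
Fix a vertex `i`. The monomial map `ψᵢ : x_m ↦ x_m x_i, y_m ↦ x_m y_i` kills every `f_ab`, and it
identifies `x^a y^b` with `x^a' y^b'` exactly when `a + b = a' + b'` and `|b| = |b'|`; such
monomials are congruent modulo `J` by repeatedly trading `x_q y_p` for `x_p y_q`. Hence
`J = ker ψᵢ` is prime.

Deforming `ψᵢ` to `θᵢ : y_m ↦ x_m y_i + t y_m` gives `θᵢ(J) ⊆ (t)` and `θᵢ(f_ij) = t x_i f_ij`. So
`g f_ij^(k-1) ∈ J^k` gives `t^k ∣ θᵢ(g) t^(k-1) (x_i f_ij)^(k-1)`, whence `t ∣ θᵢ(g)`, i.e.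
`ψᵢ(g) = 0` and `g ∈ J`. Thus `(J^k : f_ij^(k-1)) = J` is an associated prime reached in degree
`2k - 2`. Conversely, if `(J^k : f)` is prime for `f` homogeneous of degree `d`, it contains `J`,
so `f_ij f` is a nonzero element of `J^k` of degree `d + 2`; as `J^k` lives in degrees `≥ 2k`,
`d ≥ 2k - 2`.
-/

open MvPolynomial

theorem Finsupp.exists_single_add_of_ne_zero {α : Type*} {f : α →₀ ℕ} {a : α} (h : f a ≠ 0) :
    ∃ g, f = Finsupp.single a 1 + g :=
  le_iff_exists_add.mp (Finsupp.single_le_iff.mpr (Nat.one_le_iff_ne_zero.mpr h))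

theorem Finsupp.exists_ne_zero_of_degree_eq_succ {α : Type*} {f : α →₀ ℕ} {n : ℕ}
    (h : f.degree = n + 1) : ∃ a, f a ≠ 0 := by
  by_contra! hf
  rw [show f = 0 from Finsupp.ext hf, map_zero] at h
  omega

namespace MvPolynomial

variable {σ τ R : Type*} [CommRing R]

theorem mem_of_mapDomain_eq_zero {F : (σ →₀ ℕ) →+ (τ →₀ ℕ)} {I : Ideal (MvPolynomial σ R)}
    (hI : ∀ d d', F d = F d' → monomial d (1 : R) - monomial d' 1 ∈ I)
    {g : MvPolynomial σ R} (hg : AddMonoidAlgebra.mapDomain F g = 0) : g ∈ I := by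
  set s := Function.invFun F
  have key : ∀ p : MvPolynomial σ R,
      p - AddMonoidAlgebra.mapDomain s (AddMonoidAlgebra.mapDomain F p) ∈ I := by
    intro p
    induction p using MvPolynomial.induction_on' with
    | monomial d r =>
      have h := I.mul_mem_left (C r) (hI d (s (F d)) (Function.invFun_eq ⟨d, rfl⟩).symm)
      rw [mul_sub, C_mul_monomial, C_mul_monomial, mul_one] at h
      simpa [← single_eq_monomial, AddMonoidAlgebra.mapDomain_single] using h
    | add p q hp hq =>
      rw [AddMonoidAlgebra.mapDomain_add, AddMonoidAlgebra.mapDomain_add, add_sub_add_comm]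
      exact add_mem hp hq
  simpa [hg] using key g

theorem IsHomogeneous.eq_zero_of_mem_pow_idealOfVars {p : MvPolynomial σ R} {e m : ℕ}
    (hp : p.IsHomogeneous e) (hpm : p ∈ idealOfVars σ R ^ m) (hem : e < m) : p = 0 := by
  by_contra hp0
  obtain ⟨d, hd⟩ := support_nonempty.mpr hp0
  have hdeg : d.degree = e := by
    rw [Finsupp.degree_eq_weight_one]
    exact hp (mem_support_iff.mp hd)
  have := (mem_pow_idealOfVars_iff m p).mp hpm d hd
  omega

theorem le_add_of_isPrime_colon_pow [IsDomain R] {I : Ideal (MvPolynomial σ R)} {e k d : ℕ}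
    (hI : I ≤ idealOfVars σ R ^ e)
    {h : MvPolynomial σ R} (hhI : h ∈ I) (hh0 : h ≠ 0) (hh : h.IsHomogeneous e)
    {f : MvPolynomial σ R} (hf : f.IsHomogeneous d)
    (hP : ((I ^ k).colon (Ideal.span {f})).IsPrime) : e * k ≤ e + d := by
  have hfI : f ∉ I ^ k := fun hfI => hP.ne_top <| (Ideal.eq_top_iff_one _).mpr <|
    Ideal.mem_colon_span_singleton.mpr (by rwa [one_mul])
  have hIP : I ≤ (I ^ k).colon (Ideal.span {f}) := Ideal.IsPrime.le_of_pow_le (hP := hP)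
    fun r hr => Ideal.mem_colon_span_singleton.mpr (Ideal.mul_mem_right _ _ hr)
  have hhf : h * f ∈ I ^ k := Ideal.mem_colon_span_singleton.mp (hIP hhI)
  have hpow : I ^ k ≤ idealOfVars σ R ^ (e * k) :=
    pow_mul (idealOfVars σ R) e k ▸ Ideal.pow_right_mono hI k
  by_contra! hlt
  rcases mul_eq_zero.mp ((hh.mul hf).eq_zero_of_mem_pow_idealOfVars (hpow hhf) hlt) with h0 | h0
  · exact hh0 h0
  · exact hfI (h0 ▸ zero_mem _)

end MvPolynomial

namespace Ideal

theorem mem_of_mul_pow_mem_pow {R A : Type*} [CommRing R] [CommRing A] [IsDomain A]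
    {J : Ideal R} (θ : R →+* Polynomial A) (hJ : J ≤ (span {Polynomial.X}).comap θ)
    (hker : ∀ g, (θ g).coeff 0 = 0 → g ∈ J) {f : R} {c : A} (hc : c ≠ 0)
    (hf : θ f = Polynomial.X * Polynomial.C c) {g : R} {m : ℕ} (hg : g * f ^ m ∈ J ^ (m + 1)) :
    g ∈ J := by
  have hpow : J ^ (m + 1) ≤ (span {Polynomial.X ^ (m + 1)}).comap θ := by
    rw [← span_singleton_pow]
    exact (pow_right_mono hJ _).trans (le_comap_pow _ _)
  obtain ⟨q, hq⟩ := mem_span_singleton.mp (hpow hg)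
  have hX : (Polynomial.X : Polynomial A) ∣ θ g * Polynomial.C (c ^ m) := by
    refine ⟨q, mul_left_cancel₀ (pow_ne_zero m Polynomial.X_ne_zero) ?_⟩
    rw [map_mul, map_pow, hf] at hq
    rw [Polynomial.C_pow]
    linear_combination hq
  rcases Polynomial.prime_X.dvd_or_dvd hX with h | h
  · exact hker g (Polynomial.X_dvd_iff.mp h)
  · rw [Polynomial.X_dvd_iff, Polynomial.coeff_C_zero] at h
    exact absurd h (pow_ne_zero m hc)

theorem isAssociatedPrime_colon_span_singleton {R : Type*} [CommRing R] {I : Ideal R}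
    {f : R} (h : (I.colon (Ideal.span {f})).IsPrime) :
    IsAssociatedPrime (I.colon (Ideal.span {f})) (R ⧸ I) := by
  refine ⟨h, Ideal.Quotient.mk I f, ?_⟩
  have : (⊥ : Submodule R (R ⧸ I)).colon {Ideal.Quotient.mk I f} = I.colon (Ideal.span {f}) := by
    ext r
    rw [Submodule.mem_colon_singleton, Submodule.mem_bot, Ideal.mem_colon_span_singleton,
      Algebra.smul_def, Ideal.Quotient.algebraMap_eq, ← map_mul, Ideal.Quotient.eq_zero_iff_mem]
  rw [this, h.radical]

end Ideal

namespace Paper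

variable (K : Type) [Field K]

variable {K} in
theorem vNumber_eq {σ : Type} {I : Ideal (MvPolynomial σ K)} {d : ℕ}
    (hd : ∃ f : MvPolynomial σ K, f.IsHomogeneous d ∧
      IsAssociatedPrime (I.colon (Ideal.span {f})) (MvPolynomial σ K ⧸ I))
    (hle : ∀ d' (f : MvPolynomial σ K), f.IsHomogeneous d' →
      IsAssociatedPrime (I.colon (Ideal.span {f})) (MvPolynomial σ K ⧸ I) → d ≤ d') :
    vNumber K I = d :=
  le_antisymm (Nat.sInf_le hd) (le_csInf ⟨d, hd⟩ fun d' ⟨f, hf, hP⟩ => hle d' f hf hP)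

section CompleteGraph

variable {K} {V : Type}

local notation "J" => beIdeal K (⊤ : SimpleGraph V)

theorem bedge_mem_beIdeal_top (i j : V) : bedge K i j ∈ J := by
  rcases eq_or_ne i j with rfl | hij
  · simp [bedge]
  · exact Ideal.subset_span ⟨i, j, hij, rfl⟩

theorem bedge_ne_zero {i j : V} (hij : i ≠ j) : bedge K i j ≠ 0 := by
  classical
  intro h
  have := congrArg (eval fun v => if v = .inl i ∨ v = .inr j then (1 : K) else 0) h
  simp [bedge, hij, hij.symm] at this

theorem isHomogeneous_bedge (i j : V) : (bedge K i j).IsHomogeneous 2 :=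
  ((isHomogeneous_X _ _).mul (isHomogeneous_X _ _)).sub
    ((isHomogeneous_X _ _).mul (isHomogeneous_X _ _))

theorem beIdeal_le_idealOfVars_sq (G : SimpleGraph V) :
    beIdeal K G ≤ idealOfVars (V ⊕ V) K ^ 2 := by
  have hX : ∀ u v : V ⊕ V, (X u * X v : MvPolynomial (V ⊕ V) K) ∈ idealOfVars (V ⊕ V) K ^ 2 :=
    fun u v => pow_two (idealOfVars (V ⊕ V) K) ▸
      Ideal.mul_mem_mul (Ideal.subset_span ⟨u, rfl⟩) (Ideal.subset_span ⟨v, rfl⟩)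
  rw [beIdeal, Ideal.span_le]
  rintro _ ⟨i, j, -, rfl⟩
  exact sub_mem (hX _ _) (hX _ _)

theorem monomial_sumElim_single_add_single_add (a b : V →₀ ℕ) (p q : V) :
    monomial ((Finsupp.single q 1 + a).sumElim (Finsupp.single p 1 + b)) (1 : K) =
      X (.inl q) * X (.inr p) * monomial (a.sumElim b) 1 := by
  simp [Finsupp.sumElim_add, X, monomial_mul]

theorem monomial_sumElim_exchange_sub_mem (a b : V →₀ ℕ) (p q : V) :
    monomial ((Finsupp.single q 1 + a).sumElim (Finsupp.single p 1 + b)) (1 : K) -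
      monomial ((Finsupp.single p 1 + a).sumElim (Finsupp.single q 1 + b)) 1 ∈ J := by
  rw [monomial_sumElim_single_add_single_add, monomial_sumElim_single_add_single_add, ← sub_mul]
  exact Ideal.mul_mem_right _ _ (bedge_mem_beIdeal_top q p)

theorem monomial_sumElim_single_add_right (a b : V →₀ ℕ) (q : V) :
    monomial (a.sumElim (Finsupp.single q 1 + b)) (1 : K) =
      X (.inr q) * monomial (a.sumElim b) 1 := by
  have : a.sumElim (Finsupp.single q 1 + b) = Finsupp.single (.inr q) 1 + a.sumElim b := by
    simpa using Finsupp.sumElim_add 0 a (Finsupp.single q 1) b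
  rw [this, X, monomial_mul, one_mul]

theorem monomial_sumElim_sub_mem {a b a' b' : V →₀ ℕ} (hab : a + b = a' + b')
    (hb : b.degree = b'.degree) :
    monomial (a.sumElim b) (1 : K) - monomial (a'.sumElim b') 1 ∈ J := by
  induction hn : b.degree generalizing a b a' b' with
  | zero =>
    obtain rfl : b = 0 := (Finsupp.degree_eq_zero_iff b).mp hn
    obtain rfl : b' = 0 := (Finsupp.degree_eq_zero_iff b').mp (hb ▸ hn)
    simp_all
  | succ n ih =>
    obtain ⟨q, hq⟩ := Finsupp.exists_ne_zero_of_degree_eq_succ (hb ▸ hn)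
    obtain ⟨b', rfl⟩ := Finsupp.exists_single_add_of_ne_zero hq
    have hb' : b'.degree = n := by rw [hb, map_add, Finsupp.degree_single] at hn; omega
    -- once both monomials contain `y_q`, cancel it and induct
    have reach : ∀ a₁ b₁, a₁ + (Finsupp.single q 1 + b₁) = a' + (Finsupp.single q 1 + b') →
        b₁.degree = n → monomial (a₁.sumElim (Finsupp.single q 1 + b₁)) (1 : K) -
          monomial (a'.sumElim (Finsupp.single q 1 + b')) 1 ∈ J := by
      intro a₁ b₁ h₁ hb₁
      rw [monomial_sumElim_single_add_right, monomial_sumElim_single_add_right, ← mul_sub]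
      refine Ideal.mul_mem_left _ _ (ih ?_ (hb₁.trans hb'.symm) hb₁)
      rw [add_left_comm, add_left_comm a'] at h₁
      exact add_left_cancel h₁
    by_cases hbq : b q = 0
    · -- no `y_q` in `x^a y^b`, so it has an `x_q`: trade `x_q y_p` for `x_p y_q`
      have haq : a q ≠ 0 := by
        have := congrArg (· q) hab
        simp only [Finsupp.coe_add, Pi.add_apply, Finsupp.single_eq_same] at this
        omega
      obtain ⟨p, hp⟩ := Finsupp.exists_ne_zero_of_degree_eq_succ hn
      obtain ⟨a₀, rfl⟩ := Finsupp.exists_single_add_of_ne_zero haq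
      obtain ⟨b₀, rfl⟩ := Finsupp.exists_single_add_of_ne_zero hp
      have hsame := reach (Finsupp.single p 1 + a₀) b₀ (by rw [← hab]; abel)
        (by simp at hn; omega)
      simpa using add_mem (monomial_sumElim_exchange_sub_mem a₀ b₀ p q) hsame
    · obtain ⟨b₁, rfl⟩ := Finsupp.exists_single_add_of_ne_zero hbq
      exact reach a b₁ hab (by simp at hn; omega)

noncomputable def segreExponent (i : V) : (V ⊕ V →₀ ℕ) →+ (V ⊕ V →₀ ℕ) where
  toFun d :=
    let ab := Finsupp.sumFinsuppAddEquivProdFinsupp d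
    (ab.1 + ab.2 + Finsupp.single i ab.1.degree).sumElim (Finsupp.single i ab.2.degree)
  map_zero' := by simp
  map_add' d d' := by
    simp only [map_add, Prod.fst_add, Prod.snd_add, Finsupp.single_add, ← Finsupp.sumElim_add]
    abel_nf

theorem segreExponent_sumElim (i : V) (a b : V →₀ ℕ) :
    segreExponent i (a.sumElim b) =
      (a + b + Finsupp.single i a.degree).sumElim (Finsupp.single i b.degree) := by
  simp [segreExponent]

theorem monomial_sub_mem_of_segreExponent_eq (i : V) {d d' : V ⊕ V →₀ ℕ}
    (h : segreExponent i d = segreExponent i d') : monomial d (1 : K) - monomial d' 1 ∈ J := by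
  obtain ⟨⟨a, b⟩, rfl⟩ := Finsupp.sumFinsuppAddEquivProdFinsupp.symm.surjective d
  obtain ⟨⟨a', b'⟩, rfl⟩ := Finsupp.sumFinsuppAddEquivProdFinsupp.symm.surjective d'
  change segreExponent i (a.sumElim b) = segreExponent i (a'.sumElim b') at h
  change monomial (a.sumElim b) (1 : K) - monomial (a'.sumElim b') 1 ∈ J
  rw [segreExponent_sumElim, segreExponent_sumElim] at h
  have hx : a + b + Finsupp.single i a.degree = a' + b' + Finsupp.single i a'.degree :=
    Finsupp.ext fun v => by simpa [Finsupp.sumElim_apply] using DFunLike.congr_fun h (.inl v)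
  have hy : b.degree = b'.degree := by
    simpa [Finsupp.sumElim_apply] using DFunLike.congr_fun h (.inr i)
  have ha : a.degree = a'.degree := by
    have := congrArg Finsupp.degree hx
    simp only [map_add, Finsupp.degree_single] at this
    omega
  rw [ha] at hx
  exact monomial_sumElim_sub_mem (add_right_cancel hx) hy

variable (K) in
/-- The monomial map `x_m ↦ x_m x_i`, `y_m ↦ x_m y_i`. -/
noncomputable def segre (i : V) : MvPolynomial (V ⊕ V) K →ₐ[K] MvPolynomial (V ⊕ V) K :=
  AddMonoidAlgebra.mapDomainAlgHom K K (segreExponent i)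

theorem segre_X_inl (i m : V) : segre K i (X (.inl m)) = X (.inl m) * X (.inl i) := by
  have : segreExponent i (.single (.inl m) 1) = .single (.inl m) 1 + .single (.inl i) 1 := by
    rw [← Finsupp.sumElim_single_zero, segreExponent_sumElim]
    simpa using Finsupp.sumElim_add (.single m 1) (.single i 1) (0 : V →₀ ℕ) 0
  simp [segre, X, ← single_eq_monomial, this]

theorem segre_X_inr (i m : V) : segre K i (X (.inr m)) = X (.inl m) * X (.inr i) := by
  have : segreExponent i (.single (.inr m) 1) = .single (.inl m) 1 + .single (.inr i) 1 := by
    rw [← Finsupp.sumElim_zero_single, segreExponent_sumElim]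
    simp
  simp [segre, X, ← single_eq_monomial, this]

theorem segre_bedge (i a b : V) : segre K i (bedge K a b) = 0 := by
  simp only [bedge, map_sub, map_mul, segre_X_inl, segre_X_inr]
  ring

theorem ker_segre (i : V) : RingHom.ker (segre K i) = J := by
  refine le_antisymm (fun g hg => mem_of_mapDomain_eq_zero
    (fun _ _ => monomial_sub_mem_of_segreExponent_eq i) hg) ?_
  rw [beIdeal, Ideal.span_le]
  rintro _ ⟨a, b, -, rfl⟩
  exact segre_bedge i a b

variable (K) in
theorem isPrime_beIdeal_top [Nonempty V] : (beIdeal K (⊤ : SimpleGraph V)).IsPrime :=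
  ker_segre (K := K) (Classical.arbitrary V) ▸ RingHom.ker_isPrime _

variable (K) in
noncomputable def segreDeformation (i : V) :
    MvPolynomial (V ⊕ V) K →ₐ[K] Polynomial (MvPolynomial (V ⊕ V) K) :=
  aeval (Sum.elim (fun m => Polynomial.C (X (.inl m) * X (.inl i)))
    (fun m => Polynomial.C (X (.inl m) * X (.inr i)) + Polynomial.X * Polynomial.C (X (.inr m))))

theorem segreDeformation_bedge (i a b : V) :
    segreDeformation K i (bedge K a b) =
      Polynomial.X * Polynomial.C (X (.inl i) * bedge K a b) := by
  simp only [bedge, segreDeformation, aeval_X, Sum.elim_inl, Sum.elim_inr, map_sub, map_mul]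
  ring

theorem coeff_zero_segreDeformation (i : V) (g : MvPolynomial (V ⊕ V) K) :
    (segreDeformation K i g).coeff 0 = segre K i g := by
  have h : Polynomial.constantCoeff.comp (segreDeformation K i).toRingHom =
      (segre K i).toRingHom := by
    refine MvPolynomial.ringHom_ext (fun r => ?_) (fun v => ?_)
    · change Polynomial.constantCoeff (segreDeformation K i (C r)) = segre K i (C r)
      rw [← algebraMap_eq, AlgHom.commutes, AlgHom.commutes]
      simp [Polynomial.algebraMap_apply]
    · rcases v with m | m <;> simp [segreDeformation, segre_X_inl, segre_X_inr]
  exact DFunLike.congr_fun h g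

theorem colon_pow_bedge_pow {k : ℕ} (hk : 1 ≤ k) {i j : V} (hij : i ≠ j) :
    (J ^ k).colon (Ideal.span {bedge K i j ^ (k - 1)}) = J := by
  obtain ⟨m, rfl⟩ := Nat.exists_eq_add_of_le' hk
  ext g
  rw [Ideal.mem_colon_span_singleton, Nat.add_sub_cancel]
  refine ⟨Ideal.mem_of_mul_pow_mem_pow (segreDeformation K i).toRingHom ?_ (fun g hg => ?_)
    (mul_ne_zero (X_ne_zero _) (bedge_ne_zero hij)) (segreDeformation_bedge i i j), fun hg => ?_⟩
  · rw [beIdeal, Ideal.span_le]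
    rintro _ ⟨a, b, -, rfl⟩
    exact Ideal.mem_span_singleton.mpr ⟨_, segreDeformation_bedge i a b⟩
  · rwa [← ker_segre i, RingHom.mem_ker, ← coeff_zero_segreDeformation]
  · rw [pow_succ']
    exact Ideal.mul_mem_mul hg (Ideal.pow_mem_pow (bedge_mem_beIdeal_top i j) m)

end CompleteGraph

theorem statement_19 {n : ℕ} (hn : 2 ≤ n) (k : ℕ) (hk : 1 ≤ k) :
    vNumber K ((beIdeal K (⊤ : SimpleGraph (Fin n))) ^ k) = 2 * k - 2 ∧
      ∀ i j : Fin n, i ≠ j →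
        Submodule.colon ((beIdeal K (⊤ : SimpleGraph (Fin n))) ^ k)
            (Ideal.span {bedge K i j ^ (k - 1)}) =
          beIdeal K (⊤ : SimpleGraph (Fin n)) := by
  have hcolon := fun (i j : Fin n) (hij : i ≠ j) => colon_pow_bedge_pow (K := K) hk hij
  let i : Fin n := ⟨0, by omega⟩
  let j : Fin n := ⟨1, by omega⟩
  have hij : i ≠ j := by simp [i, j, Fin.ext_iff]
  refine ⟨vNumber_eq ⟨bedge K i j ^ (k - 1), ?_, ?_⟩ fun d f hf hP => ?_, hcolon⟩
  · rw [show 2 * k - 2 = 2 * (k - 1) by omega]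
    exact (isHomogeneous_bedge i j).pow _
  · have : Nonempty (Fin n) := ⟨i⟩
    exact Ideal.isAssociatedPrime_colon_span_singleton
      ((hcolon i j hij).symm ▸ isPrime_beIdeal_top K)
  · have := le_add_of_isPrime_colon_pow (beIdeal_le_idealOfVars_sq _) (bedge_mem_beIdeal_top i j)
      (bedge_ne_zero hij) (isHomogeneous_bedge i j) hf hP.isPrime
    omega

end Paper
end
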